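/- arXiv:1701.06842 — 6 statements merged into one kernel-verified Lean document; each statement's English description precedes it below -/
import Mathlib

section
/- Sequence form of Burbea's inequality: let k ≥ 2 be an integer and (a_j)_{j≥0} a square-summable sequence of complex numbers. Then ∑_{j=0}^∞ (1/C(j+k-1,j)) · |∑_{j_1+⋯+j_k=j} a_{j_1}⋯a_{j_k}|² ≤ (∑_{j=0}^∞ |a_j|²)^k. -/
/-!
By Cauchy–Schwarz, `‖∑_{t} ∏ᵢ a (t i)‖² ≤ C(j+k-1, j) · ∑_{t} ∏ᵢ ‖a (t i)‖²`, the sums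
running over the `C(j+k-1, j)` tuples `t : Fin k → ℕ` with `∑ t = j`. Summed over `j`, the
right-hand sides regroup, fibre by fibre, the absolutely convergent expansion of
`(∑ ‖a j‖²)^k` over all `k`-tuples.
-/

open Finset

theorem Finset.Nat.card_antidiagonalTuple (k n : ℕ) :
    #(Nat.antidiagonalTuple k n) = (n + k - 1).choose n := by
  have e : Nat.antidiagonalTuple k n ≃ Sym (Fin k) n :=
    (Equiv.subtypeEquivRight fun _ => Nat.mem_antidiagonalTuple).trans
      (Sym.equivNatSumOfFintype (Fin k) n).symm
  rw [card_eq_of_equiv_fintype e, Sym.card_sym_eq_choose, Fintype.card_fin, add_comm k]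

theorem norm_sum_sq_div_card_le {ι E : Type*} [SeminormedAddCommGroup E] (s : Finset ι)
    (f : ι → E) : ‖∑ i ∈ s, f i‖ ^ 2 / #s ≤ ∑ i ∈ s, ‖f i‖ ^ 2 := by
  rcases s.eq_empty_or_nonempty with rfl | hs
  · simp
  rw [div_le_iff₀' (by simpa using hs)]
  calc ‖∑ i ∈ s, f i‖ ^ 2 ≤ (∑ i ∈ s, ‖f i‖) ^ 2 := by gcongr; exact norm_sum_le s f
    _ ≤ #s * ∑ i ∈ s, ‖f i‖ ^ 2 := sq_sum_le_card_mul_sum_sq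

theorem hasSum_fin_prod_of_nonneg {ι : Type*} {f : ι → ℝ} (hf : Summable f) (hf0 : 0 ≤ f)
    (m : ℕ) :
    HasSum (fun t : Fin m → ι => ∏ i, f (t i)) ((∑' n, f n) ^ m) := by
  induction m with
  | zero => simp
  | succ m ih =>
    have hprod0 : 0 ≤ fun t : Fin m → ι => ∏ i, f (t i) :=
      fun t => prod_nonneg fun i _ => hf0 _
    have hsum := hf.mul_of_nonneg ih.summable hf0 hprod0
    have hmul := hf.hasSum.mul ih hsum
    have hcons : (fun t : Fin (m + 1) → ι => ∏ i, f (t i)) ∘ Fin.consEquiv (fun _ => ι) =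
        fun p => f p.1 * ∏ i, f (p.2 i) := by
      ext p
      simp [Fin.consEquiv, Fin.prod_univ_succ]
    rwa [pow_succ', ← (Fin.consEquiv fun _ => ι).hasSum_iff, hcons]

theorem hasSum_sum_antidiagonalTuple_of_nonneg {f : ℕ → ℝ} (hf : Summable f) (hf0 : 0 ≤ f)
    (k : ℕ) :
    HasSum (fun n => ∑ t ∈ Nat.antidiagonalTuple k n, ∏ i, f (t i)) ((∑' n, f n) ^ k) := by
  have hfiber (n : ℕ) :
      (fun t : Fin k → ℕ => ∑ i, t i) ⁻¹' {n} = ↑(Nat.antidiagonalTuple k n) := by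
    ext t
    simp [Nat.mem_antidiagonalTuple]
  refine ((hasSum_fin_prod_of_nonneg hf hf0 k).tsum_fiberwise fun t => ∑ i, t i).congr_fun
    fun n => ?_
  rw [hfiber]
  exact (Finset.tsum_subtype' _ _).symm

theorem burbea_sequence_general (k : ℕ) (a : ℕ → ℂ)
    (ha : Summable fun j => ‖a j‖ ^ 2) :
    ∑' j : ℕ, (1 / ((j + k - 1).choose j : ℝ)) *
        ‖∑ t ∈ Finset.Nat.antidiagonalTuple k j, ∏ i : Fin k, a (t i)‖ ^ 2
      ≤ (∑' j : ℕ, ‖a j‖ ^ 2) ^ k := by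
  have hsq := hasSum_sum_antidiagonalTuple_of_nonneg ha (fun j => by positivity) k
  have hterm (j : ℕ) : (1 / ((j + k - 1).choose j : ℝ)) *
      ‖∑ t ∈ Nat.antidiagonalTuple k j, ∏ i : Fin k, a (t i)‖ ^ 2 ≤
        ∑ t ∈ Nat.antidiagonalTuple k j, ∏ i, ‖a (t i)‖ ^ 2 := by
    rw [one_div_mul_eq_div, ← Nat.card_antidiagonalTuple]
    simpa only [norm_prod, prod_pow] using
      norm_sum_sq_div_card_le (Nat.antidiagonalTuple k j) fun t => ∏ i : Fin k, a (t i)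
  rw [← hsq.tsum_eq]
  exact (hsq.summable.of_nonneg_of_le (fun j => by positivity) hterm).tsum_le_tsum hterm
    hsq.summable

/-- Sequence form of Burbea's inequality: for an integer `k ≥ 2` and a square-summable
complex sequence `(a_j)`,
`∑_j (1/C(j+k-1,j)) |∑_{j₁+⋯+j_k=j} a_{j₁}⋯a_{j_k}|² ≤ (∑_j |a_j|²)^k`. -/
theorem burbea_sequence (k : ℕ) (hk : 2 ≤ k) (a : ℕ → ℂ)
    (ha : Summable fun j => ‖a j‖ ^ 2) :
    ∑' j : ℕ, (1 / ((j + k - 1).choose j : ℝ)) *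
        ‖∑ t ∈ Finset.Nat.antidiagonalTuple k j, ∏ i : Fin k, a (t i)‖ ^ 2
      ≤ (∑' j : ℕ, ‖a j‖ ^ 2) ^ k :=
  burbea_sequence_general k a ha
end

section
/- Iterated Cauchy–Schwarz estimate for k-fold convolutions: for a positive integer k and a complex sequence (b_j)_{j≥0} with ∑_j C(j+k-1,j)|b_j|² < ∞, one has ∑_{j=0}^∞ |∑_{j_1+⋯+j_k=j} b_{j_1}⋯b_{j_k}|² ≤ (∑_{j=0}^∞ C(j+k-1,j)|b_j|²)^k. -/
/-!
Write `c_k(j) = multichoose k j = C(j+k-1, j)`; it counts the tuples `t : Fin k → ℕ` with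
`∑ t i = j` and is submultiplicative along such decompositions, `c_k(j) ≤ ∏ c_k(t i)`.
Cauchy–Schwarz over the `c_k(j)` tuples of sum `j` therefore bounds the `j`-th term by
`∑_{∑ t = j} ∏ c_k(t i) ‖b (t i)‖²`, and summing over `j` regroups these into the `k`-th power
of `∑ c_k(j) ‖b j‖²`; the regrouping is done in `ℝ≥0∞`, where it needs no summability.
-/

open Finset
open scoped ENNReal

namespace Nat

theorem multichoose_le_multichoose_succ_left (n k : ℕ) :
    n.multichoose k ≤ (n + 1).multichoose k := by
  cases k with
  | zero => simp
  | succ k => rw [multichoose_succ_succ]; exact le_add_right _ _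

theorem multichoose_add_le_mul (n a b : ℕ) :
    n.multichoose (a + b) ≤ n.multichoose a * n.multichoose b := by
  induction n generalizing a with
  | zero => cases a <;> cases b <;> simp [Nat.add_right_comm _ 1]
  | succ n ihn =>
    induction a with
    | zero => simp
    | succ a iha =>
      rw [Nat.add_right_comm, multichoose_succ_succ, multichoose_succ_succ, add_mul]
      gcongr ?_ + ?_
      rw [← Nat.add_right_comm]
      exact (ihn (a + 1)).trans
        (Nat.mul_le_mul_left _ (multichoose_le_multichoose_succ_left n b))

theorem multichoose_sum_le_prod {ι : Type*} (n : ℕ) (s : Finset ι) (t : ι → ℕ) :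
    n.multichoose (∑ i ∈ s, t i) ≤ ∏ i ∈ s, n.multichoose (t i) := by
  classical
  induction s using Finset.induction_on with
  | empty => simp
  | insert i s hi ih =>
    rw [sum_insert hi, prod_insert hi]
    exact (multichoose_add_le_mul n _ _).trans (Nat.mul_le_mul_left _ ih)

end Nat

theorem Finset.Nat.card_antidiagonalTuple_s4 (k n : ℕ) :
    #(Finset.Nat.antidiagonalTuple k n) = k.multichoose n := by
  rw [← piAntidiag_univ_fin_eq_antidiagonalTuple, ← map_sym_eq_piAntidiag, card_map,
    sym_univ, card_univ, Sym.card_sym_fin_eq_multichoose]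

theorem norm_sum_sq_le_sum_mul_norm_sq {ι E : Type*} [SeminormedAddCommGroup E] (s : Finset ι)
    (f : ι → E) {w : ι → ℝ} (hw : ∀ i ∈ s, (#s : ℝ) ≤ w i) :
    ‖∑ i ∈ s, f i‖ ^ 2 ≤ ∑ i ∈ s, w i * ‖f i‖ ^ 2 :=
  calc ‖∑ i ∈ s, f i‖ ^ 2 ≤ (∑ i ∈ s, ‖f i‖) ^ 2 := by gcongr; exact norm_sum_le _ _
    _ ≤ #s * ∑ i ∈ s, ‖f i‖ ^ 2 := sq_sum_le_card_mul_sum_sq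
    _ ≤ ∑ i ∈ s, w i * ‖f i‖ ^ 2 := by
      rw [mul_sum]; gcongr with i hi; exact hw i hi

theorem norm_sum_antidiagonalTuple_prod_sq_le {R : Type*} [NormedCommRing R] [NormOneClass R]
    (k j : ℕ) (b : ℕ → R) :
    ‖∑ t ∈ Finset.Nat.antidiagonalTuple k j, ∏ i, b (t i)‖ ^ 2 ≤
      ∑ t ∈ Finset.Nat.antidiagonalTuple k j, ∏ i, (k.multichoose (t i) * ‖b (t i)‖ ^ 2) := by
  refine (norm_sum_sq_le_sum_mul_norm_sq _ _ (w := fun t => ∏ i, (k.multichoose (t i) : ℝ))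
    fun t ht => ?_).trans ?_
  · rw [Finset.Nat.card_antidiagonalTuple_s4, ← (Finset.Nat.mem_antidiagonalTuple.mp ht)]
    exact_mod_cast Nat.multichoose_sum_le_prod k univ t
  · gcongr with t
    rw [prod_mul_distrib, prod_pow]
    gcongr
    exact Finset.norm_prod_le _ _

theorem ENNReal.tsum_pi_fin_prod {α : Type*} (f : α → ℝ≥0∞) (k : ℕ) :
    ∑' t : Fin k → α, ∏ i, f (t i) = (∑' a, f a) ^ k := by
  induction k with
  | zero => simp
  | succ k ih =>
    rw [← (Fin.consEquiv fun _ => α).tsum_eq, ENNReal.tsum_prod']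
    simp [Fin.consEquiv, Fin.prod_univ_succ, ENNReal.tsum_mul_left, ENNReal.tsum_mul_right, ih,
      pow_succ']

theorem ENNReal.tsum_antidiagonalTuple_prod (k : ℕ) (f : ℕ → ℝ≥0∞) :
    ∑' j, ∑ t ∈ Finset.Nat.antidiagonalTuple k j, ∏ i, f (t i) = (∑' n, f n) ^ k := by
  rw [← ENNReal.tsum_pi_fin_prod, ← (Finset.Nat.sigmaAntidiagonalTupleEquivTuple k).tsum_eq,
    ENNReal.tsum_sigma']
  exact tsum_congr fun j => (Finset.tsum_subtype _ fun t : Fin k → ℕ => ∏ i, f (t i)).symm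

theorem tsum_le_of_tsum_ofReal_le {ι : Type*} {f : ι → ℝ} (hf : ∀ i, 0 ≤ f i) {C : ℝ}
    (hC : 0 ≤ C) (h : ∑' i, ENNReal.ofReal (f i) ≤ ENNReal.ofReal C) : ∑' i, f i ≤ C := by
  have := ENNReal.toReal_le_of_le_ofReal hC h
  rwa [ENNReal.tsum_toReal_eq fun _ => ENNReal.ofReal_ne_top,
    tsum_congr fun i => ENNReal.toReal_ofReal (hf i)] at this

theorem convolution_cauchy_schwarz_general (k : ℕ) (b : ℕ → ℂ)
    (hb : Summable fun j => ((j + k - 1).choose j : ℝ) * ‖b j‖ ^ 2) :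
    ∑' j : ℕ, ‖∑ t ∈ Finset.Nat.antidiagonalTuple k j, ∏ i : Fin k, b (t i)‖ ^ 2
      ≤ (∑' j : ℕ, ((j + k - 1).choose j : ℝ) * ‖b j‖ ^ 2) ^ k := by
  simp only [Nat.add_comm _ k, ← Nat.multichoose_eq] at hb ⊢
  have hterm (j : ℕ) : 0 ≤ (k.multichoose j : ℝ) * ‖b j‖ ^ 2 := by positivity
  refine tsum_le_of_tsum_ofReal_le (fun _ => sq_nonneg _) (pow_nonneg (tsum_nonneg hterm) k) ?_
  calc ∑' j, ENNReal.ofReal (‖∑ t ∈ Finset.Nat.antidiagonalTuple k j, ∏ i, b (t i)‖ ^ 2)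
      ≤ ∑' j, ∑ t ∈ Finset.Nat.antidiagonalTuple k j, ∏ i,
          ENNReal.ofReal (k.multichoose (t i) * ‖b (t i)‖ ^ 2) := by
        gcongr with j
        simpa only [ENNReal.ofReal_sum_of_nonneg, ENNReal.ofReal_prod_of_nonneg, hterm,
          implies_true, prod_nonneg]
          using ENNReal.ofReal_le_ofReal (norm_sum_antidiagonalTuple_prod_sq_le k j b)
    _ = ENNReal.ofReal ((∑' j, (k.multichoose j : ℝ) * ‖b j‖ ^ 2) ^ k) := by
        rw [ENNReal.tsum_antidiagonalTuple_prod k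
            fun n => ENNReal.ofReal (k.multichoose n * ‖b n‖ ^ 2),
          ← ENNReal.ofReal_tsum_of_nonneg hterm hb, ENNReal.ofReal_pow (tsum_nonneg hterm)]

/-- Iterated Cauchy–Schwarz estimate for `k`-fold convolutions:
`∑_j |∑_{j₁+⋯+j_k=j} b_{j₁}⋯b_{j_k}|² ≤ (∑_j C(j+k-1,j)|b_j|²)^k`. -/
theorem convolution_cauchy_schwarz (k : ℕ) (hk : 1 ≤ k) (b : ℕ → ℂ)
    (hb : Summable fun j => ((j + k - 1).choose j : ℝ) * ‖b j‖ ^ 2) :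
    ∑' j : ℕ, ‖∑ t ∈ Finset.Nat.antidiagonalTuple k j, ∏ i : Fin k, b (t i)‖ ^ 2
      ≤ (∑' j : ℕ, ((j + k - 1).choose j : ℝ) * ‖b j‖ ^ 2) ^ k :=
  convolution_cauchy_schwarz_general k b hb
end

section
/- For every 0 < p < 1, the maximum of the function x ↦ x^{4/p-2} + (2/p - 1)² x^{4/p-4}(1 - x²) over x ∈ [0,1] equals (2/p)·(1 - p/2)^{2/p - 1}, and it is attained at x = √(1 - p/2). -/
/-!
Put `a = 2/p - 1 > 1` and `t = x²`; the function becomes `t^a + a² t^(a-1) (1 - t)`. Writing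
`t = s u` with `s = a/(a+1)`, it equals `a s^(a-1) · u^(a-1) (a - (a-1) u)`, and the last factor
is at most `1` by the weighted AM-GM inequality with weights `(a-1)/a` and `1/a`, with equality
at `u = 1`, i.e. `x² = s = 1 - p/2`.
-/

open Real Set

namespace ExtremalCalculus

noncomputable def extremalFun (a t : ℝ) : ℝ := t ^ a + a ^ 2 * t ^ (a - 1) * (1 - t)

lemma rpow_eq_rpow_sub_one_mul {t : ℝ} (ht : 0 ≤ t) {a : ℝ} (ha : a ≠ 0) :
    t ^ a = t ^ (a - 1) * t := by
  simpa using rpow_add' ht (y := a - 1) (z := 1) (by simpa using ha)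

lemma rpow_sub_one_mul_le_one {a u : ℝ} (ha : 1 ≤ a) (hu : 0 ≤ u)
    (hv : 0 ≤ a - (a - 1) * u) : u ^ (a - 1) * (a - (a - 1) * u) ≤ 1 := by
  have ha0 : 0 < a := by linarith
  have amgm := geom_mean_le_arith_mean2_weighted (div_nonneg (sub_nonneg.2 ha) ha0.le)
    (one_div_nonneg.2 ha0.le) hu hv (by field_simp; ring)
  have hmean : (a - 1) / a * u + 1 / a * (a - (a - 1) * u) = 1 := by field_simp; ring
  rw [hmean] at amgm
  have hpow := rpow_le_one (by positivity) amgm ha0.le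
  rwa [mul_rpow (by positivity) (by positivity), ← rpow_mul hu, ← rpow_mul hv,
    div_mul_cancel₀ _ ha0.ne', one_div_mul_cancel ha0.ne', rpow_one] at hpow

lemma extremalFun_le {a t : ℝ} (ha : 1 ≤ a) (ht0 : 0 ≤ t) (ht1 : t ≤ 1) :
    extremalFun a t ≤ (a + 1) * (a / (a + 1)) ^ a := by
  have ha0 : 0 < a := by linarith
  generalize hs : a / (a + 1) = s
  have hs0 : 0 < s := hs ▸ by positivity
  have hsa : s * (a + 1) = a := hs ▸ div_mul_cancel₀ a (by positivity)
  obtain ⟨u, rfl⟩ : ∃ u, t = s * u := ⟨t / s, by field_simp⟩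
  have hu : 0 ≤ u := nonneg_of_mul_nonneg_right ht0 hs0
  have hv : 0 ≤ a - (a - 1) * u :=
    (mul_nonneg_iff_of_pos_left hs0).1 <| by
      nlinarith [mul_le_mul_of_nonneg_left ht1 (sub_nonneg.2 ha)]
  have hsu : (s * u) ^ (a - 1) = s ^ (a - 1) * u ^ (a - 1) := mul_rpow hs0.le hu
  have hs_pow : s ^ a = s ^ (a - 1) * s := rpow_eq_rpow_sub_one_mul hs0.le ha0.ne'
  calc extremalFun a (s * u)
      = a * s ^ (a - 1) * (u ^ (a - 1) * (a - (a - 1) * u)) := by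
        rw [extremalFun, rpow_eq_rpow_sub_one_mul ht0 ha0.ne', hsu]
        linear_combination (-(a - 1)) * s ^ (a - 1) * u ^ (a - 1) * u * hsa
    _ ≤ a * s ^ (a - 1) :=
        mul_le_of_le_one_right (by positivity) (rpow_sub_one_mul_le_one ha hu hv)
    _ = (a + 1) * s ^ a := by linear_combination (-s ^ (a - 1)) * hsa - (a + 1) * hs_pow

lemma extremalFun_div_add_one {a : ℝ} (ha : 0 < a) :
    extremalFun a (a / (a + 1)) = (a + 1) * (a / (a + 1)) ^ a := by
  rw [extremalFun, rpow_eq_rpow_sub_one_mul (by positivity) ha.ne']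
  field_simp
  ring

lemma extremalFun_sq_eq {p x : ℝ} (hx : 0 ≤ x) :
    x ^ (4 / p - 2) + (2 / p - 1) ^ 2 * x ^ (4 / p - 4) * (1 - x ^ 2)
      = extremalFun (2 / p - 1) (x ^ 2) := by
  have hsq (b : ℝ) : x ^ (2 * b) = (x ^ 2) ^ b := by
    rw [rpow_mul hx]; norm_num
  rw [extremalFun, ← hsq, ← hsq]
  ring_nf

end ExtremalCalculus

open ExtremalCalculus in
/-- The maximum of `x ↦ x^{4/p-2} + (2/p-1)² x^{4/p-4}(1-x²)` over `[0,1]` equals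
`(2/p)(1-p/2)^{2/p-1}`, attained at `x = √(1-p/2)`, for `0 < p < 1`. -/
theorem extremal_calculus (p : ℝ) (hp0 : 0 < p) (hp1 : p < 1) :
    (∀ x ∈ Icc (0 : ℝ) 1,
        x ^ (4 / p - 2) + (2 / p - 1) ^ 2 * x ^ (4 / p - 4) * (1 - x ^ 2)
          ≤ (2 / p) * (1 - p / 2) ^ (2 / p - 1)) ∧
      (Real.sqrt (1 - p / 2)) ^ (4 / p - 2) +
          (2 / p - 1) ^ 2 * (Real.sqrt (1 - p / 2)) ^ (4 / p - 4) *
            (1 - (Real.sqrt (1 - p / 2)) ^ 2)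
        = (2 / p) * (1 - p / 2) ^ (2 / p - 1) := by
  have ha : 1 ≤ 2 / p - 1 := by
    rw [le_sub_iff_add_le, le_div_iff₀ hp0]; linarith
  have hsum : 2 / p - 1 + 1 = 2 / p := by ring
  have hmax : (2 / p - 1) / (2 / p - 1 + 1) = 1 - p / 2 := by field_simp; ring
  have hmax_val : (2 / p - 1 + 1) * ((2 / p - 1) / (2 / p - 1 + 1)) ^ (2 / p - 1)
      = 2 / p * (1 - p / 2) ^ (2 / p - 1) := by rw [hmax, hsum]
  refine ⟨fun x ⟨hx0, hx1⟩ => ?_, ?_⟩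
  · rw [extremalFun_sq_eq hx0, ← hmax_val]
    exact extremalFun_le ha (sq_nonneg x) (pow_le_one₀ hx0 hx1)
  · rw [extremalFun_sq_eq (sqrt_nonneg _), sq_sqrt (by linarith), ← hmax_val, ← hmax]
    exact extremalFun_div_add_one (by linarith)
end

section
/- Monotonicity of the correction coefficients: define C_j(α) := ⌊α⌋·(α/⌊α⌋)^j − α for real α ≥ 1 and integer j ≥ 2. Then C_j(α+1) ≤ C_j(α) for all α ≥ 1 and j ≥ 2. -/
lemma correction_coeff_aux (m t : ℝ) (hm : 1 ≤ m) (ht : 0 ≤ t) (j : ℕ) :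
    (m + 1) * ((m + 1 + t) / (m + 1)) ^ j - (m + 1 + t)
      ≤ m * ((m + t) / m) ^ j - (m + t) := by
  have hm0 : (0:ℝ) < m := by linarith
  have hm1 : (0:ℝ) < m + 1 := by linarith
  have e1 : (m + t) / m = t / m + 1 := by field_simp; ring
  have e2 : (m + 1 + t) / (m + 1) = t / (m + 1) + 1 := by field_simp; ring
  have main : (m + 1) * (t / (m + 1) + 1) ^ j ≤ m * (t / m + 1) ^ j + 1 := by
    rw [add_pow, add_pow, Finset.mul_sum, Finset.mul_sum]
    have key : ∀ k ∈ Finset.range (j + 1),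
        (m + 1) * ((t / (m + 1)) ^ k * 1 ^ (j - k) * (j.choose k : ℝ))
          ≤ m * ((t / m) ^ k * 1 ^ (j - k) * (j.choose k : ℝ))
            + (if k = 0 then 1 else 0) := by
      intro k _
      rcases k with _ | s
      · simp
      · simp only [if_neg (Nat.succ_ne_zero s), add_zero, one_pow, mul_one]
        have hC : (0:ℝ) ≤ (j.choose (s+1) : ℝ) := Nat.cast_nonneg _
        have h1 : (m + 1) * (t / (m + 1)) ^ (s + 1) = t ^ (s+1) / (m + 1) ^ s := by
          rw [div_pow]; field_simp; ring
        have h2 : m * (t / m) ^ (s + 1) = t ^ (s+1) / m ^ s := by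
          rw [div_pow]; field_simp; ring
        rw [mul_comm ((t / (m+1)) ^ (s+1)), ← mul_assoc,
            mul_comm ((t / m) ^ (s+1)), ← mul_assoc]
        have hdiv : t ^ (s+1) / (m + 1) ^ s ≤ t ^ (s+1) / m ^ s := by
          have hp : m ^ s ≤ (m + 1) ^ s :=
            pow_le_pow_left₀ (le_of_lt hm0) (by linarith) s
          exact div_le_div_of_nonneg_left (by positivity) (pow_pos hm0 s) hp
        calc (m + 1) * (j.choose (s+1) : ℝ) * (t / (m + 1)) ^ (s + 1)
            = (j.choose (s+1) : ℝ) * ((m+1) * (t / (m + 1)) ^ (s + 1)) := by ring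
          _ = (j.choose (s+1) : ℝ) * (t ^ (s+1) / (m + 1) ^ s) := by rw [h1]
          _ ≤ (j.choose (s+1) : ℝ) * (t ^ (s+1) / m ^ s) := by
              exact mul_le_mul_of_nonneg_left hdiv hC
          _ = (j.choose (s+1) : ℝ) * (m * (t / m) ^ (s + 1)) := by rw [h2]
          _ = m * (j.choose (s+1) : ℝ) * (t / m) ^ (s + 1) := by ring
    calc ∑ k ∈ Finset.range (j+1), (m + 1) * ((t / (m + 1)) ^ k * 1 ^ (j - k) * (j.choose k : ℝ))
        ≤ ∑ k ∈ Finset.range (j+1), (m * ((t / m) ^ k * 1 ^ (j - k) * (j.choose k : ℝ))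
            + (if k = 0 then 1 else 0)) := Finset.sum_le_sum key
      _ = (∑ k ∈ Finset.range (j+1), m * ((t / m) ^ k * 1 ^ (j - k) * (j.choose k : ℝ)))
            + ∑ k ∈ Finset.range (j+1), (if k = 0 then 1 else 0) := Finset.sum_add_distrib
      _ = (∑ k ∈ Finset.range (j+1), m * ((t / m) ^ k * 1 ^ (j - k) * (j.choose k : ℝ))) + 1 := by
          congr 1
          rw [Finset.sum_ite_eq' (Finset.range (j+1)) 0 (fun _ => (1:ℝ))]
          simp
  rw [e1, e2]
  linarith

/-- Monotonicity of the correction coefficients `C_j(α) = ⌊α⌋(α/⌊α⌋)^j − α`: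
for real `α ≥ 1` and integer `j ≥ 2`, `C_j(α+1) ≤ C_j(α)`. -/
theorem correction_coeff_antitone (α : ℝ) (hα : 1 ≤ α) (j : ℕ) (hj : 2 ≤ j) :
    (⌊α + 1⌋₊ : ℝ) * ((α + 1) / (⌊α + 1⌋₊ : ℝ)) ^ j - (α + 1)
      ≤ (⌊α⌋₊ : ℝ) * (α / (⌊α⌋₊ : ℝ)) ^ j - α := by
  have h0 : (0:ℝ) ≤ α := by linarith
  have hfloor : ⌊α + 1⌋₊ = ⌊α⌋₊ + 1 := Nat.floor_add_one h0
  set n := ⌊α⌋₊ with hn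
  have hn1 : 1 ≤ n := Nat.one_le_floor_iff _ |>.mpr hα
  have hnα : (n:ℝ) ≤ α := Nat.floor_le h0
  have hm : (1:ℝ) ≤ (n:ℝ) := by exact_mod_cast hn1
  have ht : 0 ≤ α - n := by linarith
  have := correction_coeff_aux (n:ℝ) (α - n) hm ht j
  rw [hfloor]
  push_cast
  have e1 : (n:ℝ) + (α - n) = α := by ring
  have e2 : (n:ℝ) + 1 + (α - n) = α + 1 := by ring
  rw [e1, e2] at this
  convert this using 3 <;> ring
end

section
/- Uniform bounds for G_α: for real α ≥ 1 and 0 ≤ x ≤ 1/2, the function G_α(x) := (1-x)^α · (1 − (α/⌊α⌋)x)^{-⌊α⌋} satisfies 1 ≤ G_α(x), and moreover G_α(x) ≤ 1 + 384·x² when α ≥ 2 and G_α(x) ≤ 1 + x²·16(α-1)/(2-α)³ when 1 ≤ α < 2. -/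
/-! With `n = ⌊α⌋₊` and `p = α / n ∈ [1, 2)` one has `G_α(x) = ((1 - x) ^ p / (1 - p x)) ^ n`.
Bernoulli's inequality `1 - p x ≤ (1 - x) ^ p` gives the lower bound. Writing
`(1 - x) ^ p = (1 - x) (1 - x) ^ (p - 1)` and using the reverse Bernoulli inequality for the
exponent `p - 1 ∈ [0, 1)` gives `(1 - x) ^ p ≤ 1 - p x + (p - 1) x²`. For `α ≥ 2` this bounds the
ratio by `1 + 4 (p - 1) x²`, and since `n (p - 1) = α - n < 1` its `n`-th power is at most
`exp (4 x²) ≤ 1 + 8 x²`. For `α < 2` we have `n = 1` and `1 - α x ≥ (2 - α) / 2`. -/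

open Set Real

lemma one_sub_mul_le_one_sub_rpow {p x : ℝ} (hp : 1 ≤ p) (hx : x ≤ 1) :
    1 - p * x ≤ (1 - x) ^ p := by
  simpa [sub_eq_add_neg] using one_add_mul_self_le_rpow_one_add (s := -x) (by linarith) hp

lemma one_sub_rpow_le {p x : ℝ} (hp₁ : 1 ≤ p) (hp₂ : p ≤ 2) (hx : x ≤ 1) :
    (1 - x) ^ p ≤ 1 - p * x + (p - 1) * x ^ 2 := by
  have hsub : (1 - x) ^ (p - 1) ≤ 1 - (p - 1) * x := by
    simpa [sub_eq_add_neg] using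
      rpow_one_add_le_one_add_mul_self (s := -x) (by linarith) (p := p - 1) (by linarith)
        (by linarith)
  calc (1 - x) ^ p = (1 - x) * (1 - x) ^ (p - 1) := by
        rw [← rpow_one_add' (by linarith) (by linarith), add_sub_cancel]
    _ ≤ (1 - x) * (1 - (p - 1) * x) := by gcongr
    _ = 1 - p * x + (p - 1) * x ^ 2 := by ring

lemma one_add_pow_le_one_add_two_mul {y : ℝ} {n : ℕ} (hy : 0 ≤ y) (hny : n * y ≤ 1) :
    (1 + y) ^ n ≤ 1 + 2 * (n * y) := by
  have hexp : exp (n * y) ≤ 1 + n * y + (n * y) ^ 2 := by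
    have := abs_exp_sub_one_sub_id_le (x := n * y) (by rw [abs_le]; constructor <;> nlinarith)
    linarith [le_abs_self (exp (n * y) - 1 - n * y)]
  calc (1 + y) ^ n ≤ exp y ^ n := by gcongr; linarith [add_one_le_exp y]
    _ = exp (n * y) := (exp_nat_mul y n).symm
    _ ≤ 1 + 2 * (n * y) := by nlinarith [mul_nonneg (Nat.cast_nonneg n) hy]

lemma rpow_mul_natCast_mul_rpow_neg_natCast {a b : ℝ} (ha : 0 ≤ a) (hb : 0 ≤ b) (p : ℝ) (n : ℕ) :
    a ^ (p * n) * b ^ (-(n : ℝ)) = (a ^ p / b) ^ n := by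
  rw [rpow_mul_natCast ha, rpow_neg hb, rpow_natCast, div_pow, div_eq_mul_inv]

lemma one_le_one_sub_rpow_div {p x : ℝ} (hp : 1 ≤ p) (hx : x ≤ 1) (hpx : 0 < 1 - p * x) :
    1 ≤ (1 - x) ^ p / (1 - p * x) :=
  (one_le_div hpx).2 (one_sub_mul_le_one_sub_rpow hp hx)

lemma one_sub_rpow_div_le {p x : ℝ} (hp₁ : 1 ≤ p) (hp₂ : p ≤ 2) (hx : x ≤ 1)
    (hpx : 0 < 1 - p * x) :
    (1 - x) ^ p / (1 - p * x) ≤ 1 + (p - 1) * x ^ 2 / (1 - p * x) := by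
  rw [div_le_iff₀ hpx, add_mul, div_mul_cancel₀ _ hpx.ne']
  linarith [one_sub_rpow_le hp₁ hp₂ hx]

lemma one_sub_rpow_div_pow_le {n : ℕ} {p x : ℝ} (hn : 2 ≤ n) (hp : 1 ≤ p) (hnp : n * (p - 1) ≤ 1)
    (hx : x ∈ Icc (0 : ℝ) (1 / 2)) :
    ((1 - x) ^ p / (1 - p * x)) ^ n ≤ 1 + 8 * x ^ 2 := by
  obtain ⟨hx₀, hx₁⟩ := hx
  have hn' : (2 : ℝ) ≤ n := by exact_mod_cast hn
  have hp₂ : p - 1 ≤ 1 / 2 := by nlinarith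
  have hpx : 1 / 4 ≤ 1 - p * x := by nlinarith
  have hy : 0 ≤ 4 * ((p - 1) * x ^ 2) := by positivity
  have hratio : (1 - x) ^ p / (1 - p * x) ≤ 1 + 4 * ((p - 1) * x ^ 2) := by
    refine (one_sub_rpow_div_le hp (by linarith) (by linarith) (by linarith)).trans ?_
    rw [add_le_add_iff_left, div_le_iff₀ (by linarith)]
    nlinarith
  have hny : n * (4 * ((p - 1) * x ^ 2)) ≤ 4 * x ^ 2 := by nlinarith [sq_nonneg x]
  calc ((1 - x) ^ p / (1 - p * x)) ^ n ≤ (1 + 4 * ((p - 1) * x ^ 2)) ^ n := by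
        gcongr
        exact zero_le_one.trans (one_le_one_sub_rpow_div hp (by linarith) (by linarith))
    _ ≤ 1 + 2 * (n * (4 * ((p - 1) * x ^ 2))) :=
        one_add_pow_le_one_add_two_mul hy (by nlinarith)
    _ ≤ 1 + 8 * x ^ 2 := by linarith

lemma one_sub_rpow_div_le_of_lt_two {p x : ℝ} (hp₁ : 1 ≤ p) (hp₂ : p < 2)
    (hx : x ∈ Icc (0 : ℝ) (1 / 2)) :
    (1 - x) ^ p / (1 - p * x) ≤ 1 + x ^ 2 * (16 * (p - 1) / (2 - p) ^ 3) := by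
  obtain ⟨hx₀, hx₁⟩ := hx
  have hpx : (2 - p) / 2 ≤ 1 - p * x := by nlinarith
  have hd : 0 < 2 - p := by linarith
  refine (one_sub_rpow_div_le hp₁ hp₂.le (by linarith) (by linarith)).trans ?_
  rw [add_le_add_iff_left]
  calc (p - 1) * x ^ 2 / (1 - p * x) ≤ (p - 1) * x ^ 2 / ((2 - p) / 2) := by
        gcongr
    _ ≤ (p - 1) * x ^ 2 / ((2 - p) / 2) * (8 / (2 - p) ^ 2) := by
        refine le_mul_of_one_le_right (by positivity) ?_
        rw [one_le_div (by positivity)]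
        nlinarith
    _ = x ^ 2 * (16 * (p - 1) / (2 - p) ^ 3) := by
        field_simp
        ring

/-- Uniform bounds for `G_α(x) = (1-x)^α (1-(α/⌊α⌋)x)^{-⌊α⌋}` on `0 ≤ x ≤ 1/2`,
for real `α ≥ 1`:  `1 ≤ G_α(x)`, with `G_α(x) ≤ 1 + 384 x²` when `α ≥ 2` and
`G_α(x) ≤ 1 + 16(α-1)/(2-α)³ · x²` when `1 ≤ α < 2`. -/
theorem G_bounds (α : ℝ) (hα : 1 ≤ α) (x : ℝ) (hx : x ∈ Icc (0 : ℝ) (1 / 2)) :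
    1 ≤ (1 - x) ^ α * (1 - (α / (⌊α⌋₊ : ℝ)) * x) ^ (-(⌊α⌋₊ : ℝ)) ∧
      (2 ≤ α →
        (1 - x) ^ α * (1 - (α / (⌊α⌋₊ : ℝ)) * x) ^ (-(⌊α⌋₊ : ℝ)) ≤ 1 + 384 * x ^ 2) ∧
      (α < 2 →
        (1 - x) ^ α * (1 - (α / (⌊α⌋₊ : ℝ)) * x) ^ (-(⌊α⌋₊ : ℝ))
          ≤ 1 + x ^ 2 * (16 * (α - 1) / (2 - α) ^ 3)) := by
  set n := ⌊α⌋₊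
  have hn : 1 ≤ n := Nat.le_floor (by exact_mod_cast hα)
  have hn₀ : (0 : ℝ) < n := by exact_mod_cast hn
  have hpn : α / n * n = α := div_mul_cancel₀ α hn₀.ne'
  have hnp : n * (α / n - 1) < 1 := by
    rw [mul_sub, mul_comm, hpn, mul_one]; linarith [Nat.lt_floor_add_one α]
  have hp₁ : 1 ≤ α / n := (one_le_div hn₀).2 (Nat.floor_le (by linarith))
  have hp₂ : α / n < 2 := by nlinarith [(Nat.one_le_cast (α := ℝ)).2 hn]
  have hpx : 0 < 1 - α / n * x := by nlinarith [hx.1, hx.2]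
  have hx₁ : x ≤ 1 := by linarith [hx.2]
  have hG := rpow_mul_natCast_mul_rpow_neg_natCast (sub_nonneg.2 hx₁) hpx.le (α / n) n
  rw [hpn] at hG
  rw [hG]
  refine ⟨one_le_pow₀ (one_le_one_sub_rpow_div hp₁ hx₁ hpx), fun h2 => ?_, fun h2 => ?_⟩
  · have hle := one_sub_rpow_div_pow_le (Nat.le_floor (by exact_mod_cast h2)) hp₁ hnp.le hx
    nlinarith [sq_nonneg x]
  · have h1 : n = 1 := (Nat.floor_eq_iff' one_ne_zero).2 ⟨by simpa using hα, by norm_num; linarith⟩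
    simp only [h1, Nat.cast_one, div_one, pow_one]
    exact one_sub_rpow_div_le_of_lt_two hα h2 hx
end

section
/- Second-order expansion of the H^p norm of 1+εz: for every p > 0, lim_{ε→0⁺} [ (∫_𝕋 |1+εz|^p dμ(z))^{2/p} − 1 ] / ε² = p/2, where μ is normalized Lebesgue measure on the unit circle 𝕋. -/
/-!
For `z = e^{iθ}` and `c = cos θ` one has `|1 + εz|^p = g_c(ε) := (1 + 2cε + ε²)^{p/2}`, with
`g_c(0) = 1`, `g_c'(0) = pc` and `g_c''(0) = p + p(p-2)c²`. By the Lagrange form of Taylor's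
theorem, `(g_c(ε) - 1 - pcε)/ε²` is a value of `g_c''/2` on `(0, ε)`; hence it tends to
`g_c''(0)/2` and is bounded uniformly in `c ∈ [-1, 1]`. The linear term has mean zero, so dominated
convergence shows that the mean `M(ε)` of `|1 + εz|^p` over the circle satisfies
`(M(ε) - 1)/ε² → (p + p(p-2)/2)/2 = p²/4`, and the chain rule for `x ↦ x^{2/p}` at `1` turns this
into `(M(ε)^{2/p} - 1)/ε² → (2/p)(p²/4) = p/2`.
-/

open Real Filter Set Topology MeasureTheory

theorem exists_taylor_mean_remainder_lagrange_two {f f' f'' : ℝ → ℝ} {ε : ℝ} (hε : 0 < ε)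
    (hf : ∀ t ∈ Icc 0 ε, HasDerivAt f (f' t) t)
    (hf' : ∀ t ∈ Icc 0 ε, HasDerivAt f' (f'' t) t) :
    ∃ η ∈ Ioo 0 ε, f ε - f 0 - f' 0 * ε = f'' η / 2 * ε ^ 2 := by
  -- Cauchy's mean value theorem against `t ^ 2`, then the mean value theorem for `f'`.
  obtain ⟨ξ, hξ, hcauchy⟩ := exists_ratio_hasDerivAt_eq_ratio_slope
    (fun t => f t - f 0 - f' 0 * t) (fun t => f' t - f' 0) hε
    (fun t ht => ((hf t ht).continuousAt.continuousWithinAt.sub continuousWithinAt_const).sub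
      (continuousWithinAt_const.mul continuousWithinAt_id))
    (fun t ht => ((hf t (Ioo_subset_Icc_self ht)).sub_const (f 0)).sub
      (by simpa using (hasDerivAt_id t).const_mul (f' 0)))
    (fun t => t ^ 2) (fun t => 2 * t) (continuous_pow 2).continuousOn
    (fun t _ => by simpa using hasDerivAt_pow 2 t)
  have hξε : Icc 0 ξ ⊆ Icc 0 ε := Icc_subset_Icc_right hξ.2.le
  obtain ⟨η, hη, hslope⟩ := exists_hasDerivAt_eq_slope f' f'' hξ.1
    (fun t ht => (hf' t (hξε ht)).continuousAt.continuousWithinAt)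
    (fun t ht => hf' t (hξε (Ioo_subset_Icc_self ht)))
  refine ⟨η, ⟨hη.1, hη.2.trans hξ.2⟩, ?_⟩
  rw [hslope]
  simp only [sub_self, sub_zero] at hcauchy ⊢
  field_simp
  rw [eq_div_iff hξ.1.ne']
  linear_combination -hcauchy

theorem tendsto_taylor_remainder_div_sq {f f' f'' : ℝ → ℝ} {r : ℝ} (hr : 0 < r)
    (hf : ∀ t ∈ Ico 0 r, HasDerivAt f (f' t) t)
    (hf' : ∀ t ∈ Ico 0 r, HasDerivAt f' (f'' t) t) (hf'' : ContinuousWithinAt f'' (Ioi 0) 0) :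
    Tendsto (fun ε => (f ε - f 0 - f' 0 * ε) / ε ^ 2) (𝓝[>] 0) (𝓝 (f'' 0 / 2)) := by
  refine (nhdsGT_basis (0 : ℝ)).tendsto_left_iff.2 fun U hU => ?_
  obtain ⟨δ, hδ, hmaps⟩ := (nhdsGT_basis (0 : ℝ)).tendsto_left_iff.1 (hf''.div_const 2) U hU
  refine ⟨min δ r, lt_min hδ hr, fun ε hε => ?_⟩
  have hεr : Icc 0 ε ⊆ Ico 0 r := Icc_subset_Ico_right (hε.2.trans_le (min_le_right _ _))
  obtain ⟨η, hη, heq⟩ := exists_taylor_mean_remainder_lagrange_two hε.1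
    (fun t ht => hf t (hεr ht)) (fun t ht => hf' t (hεr ht))
  simp only [heq, mul_div_cancel_right₀ _ (pow_ne_zero 2 hε.1.ne')]
  exact hmaps ⟨hη.1, hη.2.trans (hε.2.trans_le (min_le_left _ _))⟩

theorem HasDerivAt.tendsto_sub_div_of_tendsto_sub_div {φ M u : ℝ → ℝ} {d x a : ℝ}
    {l : Filter ℝ} (hφ : HasDerivAt φ d x) (hu : Tendsto u l (𝓝 0)) (hu₀ : ∀ᶠ ε in l, u ε ≠ 0)
    (hM : Tendsto (fun ε => (M ε - x) / u ε) l (𝓝 a)) :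
    Tendsto (fun ε => (φ (M ε) - φ x) / u ε) l (𝓝 (d * a)) := by
  have hMx : Tendsto M l (𝓝 x) := by
    refine ((hM.mul hu).add_const x).congr' ?_ |>.trans_eq (by simp)
    filter_upwards [hu₀] with ε hε
    field_simp
    ring
  have hslope : Tendsto (fun ε => dslope φ x (M ε)) l (𝓝 d) := by
    rw [← hφ.deriv, ← dslope_same]
    exact (continuousAt_dslope_same.2 hφ.differentiableAt).tendsto.comp hMx
  refine (hslope.mul hM).congr fun ε => ?_
  rw [← sub_smul_dslope φ x (M ε), smul_eq_mul]
  ring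

def circleNormSq (c t : ℝ) : ℝ := 1 + 2 * c * t + t ^ 2

theorem normSq_one_add_mul_exp (t θ : ℝ) :
    Complex.normSq (1 + t * Complex.exp (θ * Complex.I)) = circleNormSq (cos θ) t := by
  rw [Complex.normSq_apply]
  simp only [Complex.add_re, Complex.add_im, Complex.mul_re, Complex.mul_im,
    Complex.exp_ofReal_mul_I_re, Complex.exp_ofReal_mul_I_im, Complex.ofReal_re,
    Complex.ofReal_im, Complex.one_re, Complex.one_im, circleNormSq]
  linear_combination t ^ 2 * sin_sq_add_cos_sq θ

theorem circleNormSq_pos {c t : ℝ} (hc : -1 ≤ c) (ht₀ : 0 ≤ t) (ht₁ : t < 1) :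
    0 < circleNormSq c t := by
  unfold circleNormSq
  nlinarith [mul_le_mul_of_nonneg_right hc ht₀]

theorem hasDerivAt_circleNormSq (c t : ℝ) : HasDerivAt (circleNormSq c) (2 * c + 2 * t) t :=
  ((((hasDerivAt_id t).const_mul (2 * c)).const_add 1).add (hasDerivAt_pow 2 t)).congr_deriv
    (by simp)

section HardyNorm

variable (p : ℝ)

noncomputable def hpIntegrand (c t : ℝ) : ℝ := circleNormSq c t ^ (p / 2)

noncomputable def hpIntegrandDeriv (c t : ℝ) : ℝ :=
  p * (c + t) * circleNormSq c t ^ (p / 2 - 1)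

noncomputable def hpIntegrandDeriv2 (c t : ℝ) : ℝ :=
  p * circleNormSq c t ^ (p / 2 - 1) + p * (p - 2) * (c + t) ^ 2 * circleNormSq c t ^ (p / 2 - 2)

theorem norm_one_add_mul_exp_rpow (ε θ : ℝ) :
    ‖(1 : ℂ) + ε * Complex.exp (θ * Complex.I)‖ ^ p = hpIntegrand p (cos θ) ε := by
  rw [Complex.norm_def, normSq_one_add_mul_exp, sqrt_eq_rpow,
    ← rpow_mul (normSq_one_add_mul_exp ε θ ▸ Complex.normSq_nonneg _), hpIntegrand]
  congr 1
  ring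

theorem hasDerivAt_hpIntegrand {c t : ℝ} (h : 0 < circleNormSq c t) :
    HasDerivAt (hpIntegrand p c) (hpIntegrandDeriv p c t) t :=
  ((hasDerivAt_circleNormSq c t).rpow_const (p := p / 2) (Or.inl h.ne')).congr_deriv
    (by unfold hpIntegrandDeriv; ring)

theorem hasDerivAt_hpIntegrandDeriv {c t : ℝ} (h : 0 < circleNormSq c t) :
    HasDerivAt (hpIntegrandDeriv p c) (hpIntegrandDeriv2 p c t) t := by
  have hlin : HasDerivAt (fun t => p * (c + t)) p t := by
    simpa using ((hasDerivAt_id t).const_add c).const_mul p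
  refine (hlin.mul ((hasDerivAt_circleNormSq c t).rpow_const (p := p / 2 - 1)
    (Or.inl h.ne'))).congr_deriv ?_
  rw [hpIntegrandDeriv2, show p / 2 - 1 - 1 = p / 2 - 2 by ring]
  ring

theorem continuousAt_hpIntegrandDeriv2 {x : ℝ × ℝ} (h : circleNormSq x.1 x.2 ≠ 0) :
    ContinuousAt (fun x : ℝ × ℝ => hpIntegrandDeriv2 p x.1 x.2) x := by
  have hb : Continuous fun x : ℝ × ℝ => circleNormSq x.1 x.2 := by unfold circleNormSq; fun_prop
  have h₁ := hb.continuousAt.rpow_const (p := p / 2 - 1) (Or.inl h)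
  have h₂ := hb.continuousAt.rpow_const (p := p / 2 - 2) (Or.inl h)
  exact (continuousAt_const.mul h₁).add
    ((continuousAt_const.mul ((continuousAt_fst.add continuousAt_snd).pow 2)).mul h₂)

theorem continuous_hpIntegrand_cos {t : ℝ} (ht₀ : 0 ≤ t) (ht₁ : t < 1) :
    Continuous fun θ => hpIntegrand p (cos θ) t := by
  have h : ∀ θ, circleNormSq (cos θ) t ≠ 0 := fun θ =>
    (circleNormSq_pos (neg_one_le_cos θ) ht₀ ht₁).ne'
  exact (by unfold circleNormSq; fun_prop : Continuous fun θ => circleNormSq (cos θ) t).rpow_const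
    fun θ => Or.inl (h θ)

theorem hpIntegrand_zero (c : ℝ) : hpIntegrand p c 0 = 1 := by
  simp [hpIntegrand, circleNormSq]

theorem hpIntegrandDeriv_zero (c : ℝ) : hpIntegrandDeriv p c 0 = p * c := by
  simp [hpIntegrandDeriv, circleNormSq]

theorem hpIntegrandDeriv2_zero (c : ℝ) :
    hpIntegrandDeriv2 p c 0 = p + p * (p - 2) * c ^ 2 := by
  simp [hpIntegrandDeriv2, circleNormSq]

noncomputable def hpTaylorQuotient (c ε : ℝ) : ℝ :=
  (hpIntegrand p c ε - 1 - p * c * ε) / ε ^ 2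

theorem exists_hpTaylorQuotient_eq {c ε : ℝ} (hc : -1 ≤ c) (hε₀ : 0 < ε) (hε₁ : ε < 1) :
    ∃ η ∈ Ioo 0 ε, hpTaylorQuotient p c ε = hpIntegrandDeriv2 p c η / 2 := by
  have hpos : ∀ t ∈ Icc 0 ε, 0 < circleNormSq c t := fun t ht =>
    circleNormSq_pos hc ht.1 (ht.2.trans_lt hε₁)
  obtain ⟨η, hη, heq⟩ := exists_taylor_mean_remainder_lagrange_two hε₀
    (fun t ht => hasDerivAt_hpIntegrand p (hpos t ht))
    (fun t ht => hasDerivAt_hpIntegrandDeriv p (hpos t ht))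
  refine ⟨η, hη, ?_⟩
  rw [hpIntegrand_zero, hpIntegrandDeriv_zero] at heq
  rw [hpTaylorQuotient, heq, mul_div_cancel_right₀ _ (pow_ne_zero 2 hε₀.ne')]

theorem exists_bound_hpTaylorQuotient :
    ∃ C, ∀ c ∈ Icc (-1 : ℝ) 1, ∀ ε ∈ Ioo (0 : ℝ) (1 / 2), |hpTaylorQuotient p c ε| ≤ C := by
  obtain ⟨C, hC⟩ := (isCompact_Icc.prod isCompact_Icc).exists_bound_of_continuousOn
    (s := Icc (-1 : ℝ) 1 ×ˢ Icc 0 (1 / 2)) fun x hx =>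
      (continuousAt_hpIntegrandDeriv2 p
        (circleNormSq_pos hx.1.1 hx.2.1 (hx.2.2.trans_lt one_half_lt_one)).ne').continuousWithinAt
  refine ⟨C / 2, fun c hc ε hε => ?_⟩
  obtain ⟨η, hη, heq⟩ := exists_hpTaylorQuotient_eq p hc.1 hε.1 (hε.2.trans one_half_lt_one)
  rw [heq, abs_div, abs_two]
  gcongr
  exact hC (c, η) ⟨hc, hη.1.le, (hη.2.trans hε.2).le⟩

theorem tendsto_hpTaylorQuotient {c : ℝ} (hc : -1 ≤ c) :
    Tendsto (hpTaylorQuotient p c) (𝓝[>] 0) (𝓝 ((p + p * (p - 2) * c ^ 2) / 2)) := by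
  have hpos : ∀ t ∈ Ico (0 : ℝ) 1, 0 < circleNormSq c t := fun t ht =>
    circleNormSq_pos hc ht.1 ht.2
  have hcont : ContinuousAt (hpIntegrandDeriv2 p c) 0 :=
    (continuousAt_hpIntegrandDeriv2 p (x := (c, 0)) (by simp [circleNormSq])).comp
      (continuous_const.prodMk continuous_id).continuousAt
  have h := tendsto_taylor_remainder_div_sq one_pos
    (fun t ht => hasDerivAt_hpIntegrand p (hpos t ht))
    (fun t ht => hasDerivAt_hpIntegrandDeriv p (hpos t ht)) hcont.continuousWithinAt
  rwa [hpIntegrand_zero, hpIntegrandDeriv_zero, hpIntegrandDeriv2_zero] at h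

noncomputable def hpMean (ε : ℝ) : ℝ :=
  1 / (2 * π) * ∫ θ in (0 : ℝ)..2 * π, hpIntegrand p (cos θ) ε

theorem hpMean_sub_one_div_sq {ε : ℝ} (hε₀ : 0 < ε) (hε₁ : ε < 1) :
    (hpMean p ε - 1) / ε ^ 2 =
      1 / (2 * π) * ∫ θ in (0 : ℝ)..2 * π, hpTaylorQuotient p (cos θ) ε := by
  have hint : IntervalIntegrable (fun θ => hpIntegrand p (cos θ) ε) volume 0 (2 * π) :=
    (continuous_hpIntegrand_cos p hε₀.le hε₁).intervalIntegrable _ _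
  have hcos : IntervalIntegrable (fun θ => p * cos θ * ε) volume 0 (2 * π) :=
    (by fun_prop : Continuous fun θ => p * cos θ * ε).intervalIntegrable _ _
  simp only [hpTaylorQuotient]
  rw [intervalIntegral.integral_div,
    intervalIntegral.integral_sub (hint.sub intervalIntegrable_const) hcos,
    intervalIntegral.integral_sub hint intervalIntegrable_const,
    intervalIntegral.integral_mul_const,
    intervalIntegral.integral_const_mul, integral_cos, hpMean]
  simp only [sin_two_pi, sin_zero, sub_zero, mul_zero, zero_mul, intervalIntegral.integral_const,
    smul_eq_mul, mul_one]
  field_simp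

theorem integral_hpTaylorQuotient_limit :
    ∫ θ in (0 : ℝ)..2 * π, (p + p * (p - 2) * cos θ ^ 2) / 2 = π * p ^ 2 / 2 := by
  rw [intervalIntegral.integral_div, intervalIntegral.integral_add intervalIntegrable_const
    ((by fun_prop : Continuous fun θ => p * (p - 2) * cos θ ^ 2).intervalIntegrable _ _),
    intervalIntegral.integral_const_mul, integral_cos_sq]
  simp only [sin_two_pi, sin_zero, cos_zero, intervalIntegral.integral_const, smul_eq_mul]
  ring

theorem tendsto_hpMean_sub_one_div_sq :
    Tendsto (fun ε => (hpMean p ε - 1) / ε ^ 2) (𝓝[>] 0) (𝓝 (p ^ 2 / 4)) := by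
  obtain ⟨C, hC⟩ := exists_bound_hpTaylorQuotient p
  have hsmall : ∀ᶠ ε in 𝓝[>] (0 : ℝ), ε ∈ Ioo 0 (1 / 2) := Ioo_mem_nhdsGT one_half_pos
  have hDCT : Tendsto (fun ε => ∫ θ in (0 : ℝ)..2 * π, hpTaylorQuotient p (cos θ) ε) (𝓝[>] 0)
      (𝓝 (∫ θ in (0 : ℝ)..2 * π, (p + p * (p - 2) * cos θ ^ 2) / 2)) := by
    refine intervalIntegral.tendsto_integral_filter_of_dominated_convergence (fun _ => C) ?_ ?_
      intervalIntegrable_const (ae_of_all _ fun θ _ =>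
        tendsto_hpTaylorQuotient p (neg_one_le_cos θ))
    · filter_upwards [hsmall] with ε hε
      exact (((continuous_hpIntegrand_cos p hε.1.le (hε.2.trans one_half_lt_one)).sub
        continuous_const).sub (by fun_prop : Continuous fun θ => p * cos θ * ε)).div_const _
        |>.aestronglyMeasurable
    · filter_upwards [hsmall] with ε hε
      exact ae_of_all _ fun θ _ =>
        hC (cos θ) ⟨neg_one_le_cos θ, cos_le_one θ⟩ ε hε
  rw [integral_hpTaylorQuotient_limit] at hDCT
  have hlim : 1 / (2 * π) * (π * p ^ 2 / 2) = p ^ 2 / 4 := by field_simp; ring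
  rw [← hlim]
  refine (hDCT.const_mul _).congr' ?_
  filter_upwards [hsmall] with ε hε
  exact (hpMean_sub_one_div_sq p hε.1 (hε.2.trans one_half_lt_one)).symm

end HardyNorm

theorem hp_norm_expansion_general (p : ℝ) :
    Tendsto (fun ε : ℝ =>
        ((((1 / (2 * Real.pi)) *
              ∫ θ in (0 : ℝ)..(2 * Real.pi),
                ‖(1 : ℂ) + ε * Complex.exp (θ * Complex.I)‖ ^ p) ^ (2 / p) - 1) / ε ^ 2))
      (nhdsWithin 0 (Ioi 0)) (nhds (p / 2)) := by
  have hsq : Tendsto (fun ε : ℝ => ε ^ 2) (𝓝[>] 0) (𝓝 0) :=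
    tendsto_nhdsWithin_of_tendsto_nhds (by simpa using (continuous_pow 2).tendsto (0 : ℝ))
  have hsq₀ : ∀ᶠ ε : ℝ in 𝓝[>] 0, ε ^ 2 ≠ 0 := by
    filter_upwards [self_mem_nhdsWithin] with ε hε
    exact pow_ne_zero 2 (ne_of_gt hε)
  have h := (hasDerivAt_rpow_const (x := 1) (p := 2 / p) (Or.inl one_ne_zero)
    ).tendsto_sub_div_of_tendsto_sub_div hsq hsq₀ (tendsto_hpMean_sub_one_div_sq p)
  have hval : 2 / p * (p ^ 2 / 4) = p / 2 := by
    -- at `p = 0` both sides vanish, since `2 / 0 = 0`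
    rcases eq_or_ne p 0 with rfl | hp
    · simp
    · field_simp; ring
  rw [one_rpow, one_rpow, mul_one, hval] at h
  simpa only [hpMean, norm_one_add_mul_exp_rpow] using h

/-- Second-order expansion of the `H^p` norm of `1 + εz`: for every `p > 0`,
`((∫_𝕋 |1+εz|^p dμ(z))^{2/p} − 1)/ε² → p/2` as `ε → 0⁺`. -/
theorem hp_norm_expansion (p : ℝ) (hp : 0 < p) :
    Tendsto (fun ε : ℝ =>
        ((((1 / (2 * Real.pi)) *
              ∫ θ in (0 : ℝ)..(2 * Real.pi),
                ‖(1 : ℂ) + ε * Complex.exp (θ * Complex.I)‖ ^ p) ^ (2 / p) - 1) / ε ^ 2))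
      (nhdsWithin 0 (Ioi 0)) (nhds (p / 2)) :=
  hp_norm_expansion_general p
end
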